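/- arXiv:0803.1365 — 2 statements merged into one kernel-verified Lean document; each statement's English description precedes it below -/
import Mathlib

section
/- Let μ be a nonzero finite positive Borel measure on (0,∞). Let φ, ψ, θ be index functions such that θ, φ·θ and ψ·θ are μ-integrable and ∫θ dμ > 0. Suppose ψ is a continuous strictly increasing bijection of (0,∞) onto (0,∞) and that the composition φ∘ψ⁻¹ is concave. Then ∫φθ dμ ≤ (∫θ dμ) · (φ∘ψ⁻¹)( (∫ψθ dμ)/(∫θ dμ) ). -/
open MeasureTheory Set

/-! Write `g = φ ∘ ψ⁻¹`, so that `φ = g ∘ ψ` on `(0,∞)`. The inequality is Jensen's inequality for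
the concave `g`, the function `ψ` and the weight `θ`. As `g` is only concave on the open set
`(0,∞)`, it is proved with a supporting line `y ↦ g m + c (y - m)` of `g` at the weighted mean
`m = ∫ ψθ dμ / ∫ θ dμ`: integrating `φ θ ≤ (g m + c (ψ - m)) θ` against `μ` makes the `c`-term
vanish. -/

section SupportingLine

variable {S : Set ℝ} {f : ℝ → ℝ} {x y : ℝ}

lemma ConvexOn.add_rightDeriv_mul_sub_le (hf : ConvexOn ℝ S f) (hx : x ∈ interior S)
    (hy : y ∈ S) : f x + derivWithin f (Ioi x) x * (y - x) ≤ f y := by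
  rcases lt_trichotomy x y with hxy | rfl | hyx
  · have hslope := hf.rightDeriv_le_slope_of_mem_interior hx hy hxy
    rw [slope_def_field, le_div_iff₀ (sub_pos.2 hxy)] at hslope
    linarith
  · simp
  · have hslope := (hf.slope_le_leftDeriv_of_mem_interior hy hx hyx).trans
      (hf.leftDeriv_le_rightDeriv_of_mem_interior hx)
    rw [slope_def_field, div_le_iff₀ (sub_pos.2 hyx)] at hslope
    linarith

lemma ConcaveOn.exists_le_add_mul_sub (hf : ConcaveOn ℝ S f) (hx : x ∈ interior S) :
    ∃ c : ℝ, ∀ y ∈ S, f y ≤ f x + c * (y - x) :=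
  ⟨-derivWithin (-f) (Ioi x) x, fun y hy => by
    have hsupport := hf.neg.add_rightDeriv_mul_sub_le hx hy
    simp only [Pi.neg_apply] at hsupport
    linarith⟩

end SupportingLine

section WeightedJensen

variable {α : Type*} [MeasurableSpace α] {μ : Measure α}

lemma integral_pos_of_ae_pos [NeZero μ] {f : α → ℝ} (hf : ∀ᵐ a ∂μ, 0 < f a)
    (hfi : Integrable f μ) : 0 < ∫ a, f a ∂μ := by
  rw [integral_pos_iff_support_of_nonneg_ae (hf.mono fun _ h => h.le) hfi]
  exact pos_iff_ne_zero.2 (frequently_ae_iff.1 (hf.frequently.mono fun _ h => h.ne'))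

theorem ConcaveOn.integral_comp_mul_le {S : Set ℝ} {g : ℝ → ℝ} {u w : α → ℝ}
    (hg : ConcaveOn ℝ S g) (hu : ∀ᵐ a ∂μ, u a ∈ S) (hw : 0 ≤ᵐ[μ] w) (hwi : Integrable w μ)
    (huwi : Integrable (fun a => u a * w a) μ) (hgwi : Integrable (fun a => g (u a) * w a) μ)
    (hw₀ : ∫ a, w a ∂μ ≠ 0) (hm : (∫ a, u a * w a ∂μ) / ∫ a, w a ∂μ ∈ interior S) :
    ∫ a, g (u a) * w a ∂μ ≤ (∫ a, w a ∂μ) * g ((∫ a, u a * w a ∂μ) / ∫ a, w a ∂μ) := by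
  set m := (∫ a, u a * w a ∂μ) / ∫ a, w a ∂μ
  obtain ⟨c, hc⟩ := hg.exists_le_add_mul_sub hm
  have hpt : ∀ᵐ a ∂μ, g (u a) * w a ≤ (g m - c * m) * w a + c * (u a * w a) := by
    filter_upwards [hu, hw] with a hua hwa
    calc g (u a) * w a ≤ (g m + c * (u a - m)) * w a := mul_le_mul_of_nonneg_right (hc _ hua) hwa
      _ = (g m - c * m) * w a + c * (u a * w a) := by ring
  have hmw : m * ∫ a, w a ∂μ = ∫ a, u a * w a ∂μ := div_mul_cancel₀ _ hw₀
  calc ∫ a, g (u a) * w a ∂μ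
      ≤ ∫ a, (g m - c * m) * w a + c * (u a * w a) ∂μ :=
        integral_mono_ae hgwi ((hwi.const_mul _).add (huwi.const_mul _)) hpt
    _ = (g m - c * m) * (∫ a, w a ∂μ) + c * ∫ a, u a * w a ∂μ := by
        rw [integral_add (hwi.const_mul _) (huwi.const_mul _), integral_const_mul,
          integral_const_mul]
    _ = (∫ a, w a ∂μ) * g m := by linear_combination (-c) * hmw

end WeightedJensen

theorem vhs_interpolation_inequality_general
    (μ : Measure ℝ) (hsupp : μ (Iic 0) = 0)
    (φ ψ θ : ℝ → ℝ)
    (hψp : ∀ x ∈ Ioi (0:ℝ), 0 < ψ x)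
    (hθp : ∀ x ∈ Ioi (0:ℝ), 0 < θ x)
    (hθi : Integrable θ μ)
    (hφθi : Integrable (fun x => φ x * θ x) μ)
    (hψθi : Integrable (fun x => ψ x * θ x) μ)
    (hθpos : 0 < ∫ x, θ x ∂μ)
    (ψinv : ℝ → ℝ) (hψinv : InvOn ψinv ψ (Ioi 0) (Ioi 0))
    (hconc : ConcaveOn ℝ (Ioi 0) (fun y => φ (ψinv y))) :
    ∫ x, φ x * θ x ∂μ ≤
      (∫ x, θ x ∂μ) * φ (ψinv ((∫ x, ψ x * θ x ∂μ) / ∫ x, θ x ∂μ)) := by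
  have hpos : ∀ᵐ x ∂μ, x ∈ Ioi (0:ℝ) :=
    ae_iff.2 (measure_mono_null (fun x (hx : ¬0 < x) => not_lt.1 hx) hsupp)
  have : NeZero μ := ⟨by rintro rfl; simp at hθpos⟩
  have hψθpos : 0 < ∫ x, ψ x * θ x ∂μ :=
    integral_pos_of_ae_pos (hpos.mono fun x hx => mul_pos (hψp x hx) (hθp x hx)) hψθi
  have hφ : (fun x => φ x * θ x) =ᵐ[μ] fun x => φ (ψinv (ψ x)) * θ x :=
    hpos.mono fun x hx => by dsimp only; rw [hψinv.1 hx]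
  rw [integral_congr_ae hφ]
  refine hconc.integral_comp_mul_le (hpos.mono hψp) (hpos.mono fun x hx => (hθp x hx).le) hθi
    hψθi (hφθi.congr hφ) hθpos.ne' ?_
  rw [interior_Ioi]
  exact div_pos hψθpos hθpos

/-- **Interpolation inequality for variable Hilbert scales, first part** (Corollary 2).
If `ψ` is a continuous strictly increasing bijection of `(0,∞)` onto itself with
inverse `ψinv`, and `φ ∘ ψ⁻¹` is concave, then
`∫ φθ dμ ≤ (∫ θ dμ) * (φ∘ψ⁻¹)((∫ ψθ dμ)/(∫ θ dμ))`. -/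
theorem vhs_interpolation_inequality
    (μ : Measure ℝ) [IsFiniteMeasure μ] (hμ : μ ≠ 0) (hsupp : μ (Iic 0) = 0)
    (φ ψ θ : ℝ → ℝ)
    (hφm : Measurable φ) (hψm : Measurable ψ) (hθm : Measurable θ)
    (hφp : ∀ x ∈ Ioi (0:ℝ), 0 < φ x)
    (hψp : ∀ x ∈ Ioi (0:ℝ), 0 < ψ x)
    (hθp : ∀ x ∈ Ioi (0:ℝ), 0 < θ x)
    (hθi : Integrable θ μ)
    (hφθi : Integrable (fun x => φ x * θ x) μ)
    (hψθi : Integrable (fun x => ψ x * θ x) μ)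
    (hθpos : 0 < ∫ x, θ x ∂μ)
    (hψcont : ContinuousOn ψ (Ioi 0)) (hψmono : StrictMonoOn ψ (Ioi 0))
    (hψsurj : ψ '' Ioi 0 = Ioi 0)
    (ψinv : ℝ → ℝ) (hψinv : InvOn ψinv ψ (Ioi 0) (Ioi 0))
    (hconc : ConcaveOn ℝ (Ioi 0) (fun y => φ (ψinv y))) :
    ∫ x, φ x * θ x ∂μ ≤
      (∫ x, θ x ∂μ) * φ (ψinv ((∫ x, ψ x * θ x ∂μ) / ∫ x, θ x ∂μ)) :=
  vhs_interpolation_inequality_general μ hsupp φ ψ θ hψp hθp hθi hφθi hψθi hθpos ψinv hψinv hconc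
end

section
/- Let α : (0,∞) → (0,∞) be a locally integrable function satisfying α(σλ) ≤ α(λ)/σ for all σ ∈ (0,1] and all λ > 0, let c > 0, and define a(λ) = 1 + c·∫₀^λ exp(∫₁^t α(s) ds) dt for λ ≥ 0, assuming t ↦ exp(∫₁^t α(s) ds) is integrable on every interval [0,λ]. Then for every σ ∈ (0,1], the function λ ↦ a(a⁻¹(λ)/σ), defined on the range of a, is convex, where a⁻¹ is the inverse of the continuous strictly increasing function a. -/
/-!
Write `E t = exp (∫₁ᵗ α)`, so that `a = 1 + c ∫₀ E`. Substituting `t ↦ t / σ`,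
`a (v / σ) - a (u / σ) = (c / σ) ∫ᵤᵛ E (t / σ) dt`, and
`E (t / σ) / E t = exp (∫ₜ^{t/σ} α)`. The scaling relation says that `∫ₜ^{t/σ} α` is
nondecreasing in `t`, so the ratio of the integrands of `a ∘ (· / σ)` and `a` is monotone.
Hence the slopes of `a ∘ (· / σ)` against `a` increase, which is the convexity of
`a ∘ (· / σ) ∘ a⁻¹`.
-/

open MeasureTheory Set intervalIntegral

theorem convexOn_comp_of_slope_le {s : Set ℝ} {f g ginv : ℝ → ℝ}
    (hs : Convex ℝ (g '' s)) (hg : StrictMonoOn g s) (hinv : LeftInvOn ginv g s)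
    (hslope : ∀ ⦃u v w⦄, u ∈ s → v ∈ s → w ∈ s → u < v → v < w →
      (f v - f u) * (g w - g v) ≤ (f w - f v) * (g v - g u)) :
    ConvexOn ℝ (g '' s) (f ∘ ginv) := by
  refine convexOn_of_slope_mono_adjacent hs ?_
  rintro _ y _ ⟨u, hu, rfl⟩ ⟨w, hw, rfl⟩ hxy hyz
  obtain ⟨v, hv, rfl⟩ := hs.ordConnected.out ⟨u, hu, rfl⟩ ⟨w, hw, rfl⟩ ⟨hxy.le, hyz.le⟩
  simp only [Function.comp_apply, hinv hu, hinv hv, hinv hw]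
  rw [div_le_div_iff₀ (sub_pos.2 hxy) (sub_pos.2 hyz)]
  exact hslope hu hv hw ((hg.lt_iff_lt hu hv).1 hxy) ((hg.lt_iff_lt hv hw).1 hyz)

theorem integral_mul_integral_le_of_monotoneOn_div {F G : ℝ → ℝ} {u v w : ℝ}
    (huv : u ≤ v) (hvw : v ≤ w) (hG : ∀ t ∈ Icc u w, 0 < G t)
    (hFG : MonotoneOn (fun t => F t / G t) (Icc u w))
    (hF₁ : IntervalIntegrable F volume u v) (hF₂ : IntervalIntegrable F volume v w)
    (hG₁ : IntervalIntegrable G volume u v) (hG₂ : IntervalIntegrable G volume v w) :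
    (∫ t in u..v, F t) * ∫ t in v..w, G t ≤ (∫ t in v..w, F t) * ∫ t in u..v, G t := by
  have hv : v ∈ Icc u w := ⟨huv, hvw⟩
  have hleft : ∀ t ∈ Icc u v, t ∈ Icc u w := fun t ht => ⟨ht.1, ht.2.trans hvw⟩
  have hright : ∀ t ∈ Icc v w, t ∈ Icc u w := fun t ht => ⟨huv.trans ht.1, ht.2⟩
  set K := F v / G v
  have h₁ : ∫ t in u..v, F t ≤ K * ∫ t in u..v, G t := by
    rw [← intervalIntegral.integral_const_mul]
    refine integral_mono_on huv hF₁ (hG₁.const_mul K) fun t ht => ?_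
    exact (div_le_iff₀ (hG t (hleft t ht))).1 (hFG (hleft t ht) hv ht.2)
  have h₂ : K * ∫ t in v..w, G t ≤ ∫ t in v..w, F t := by
    rw [← intervalIntegral.integral_const_mul]
    refine integral_mono_on hvw (hG₂.const_mul K) hF₂ fun t ht => ?_
    exact (le_div_iff₀ (hG t (hright t ht))).1 (hFG hv (hright t ht) ht.1)
  have hI₁ : 0 ≤ ∫ t in u..v, G t := integral_nonneg huv fun t ht => (hG t (hleft t ht)).le
  have hI₂ : 0 ≤ ∫ t in v..w, G t := integral_nonneg hvw fun t ht => (hG t (hright t ht)).le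
  calc (∫ t in u..v, F t) * ∫ t in v..w, G t
      ≤ (K * ∫ t in u..v, G t) * ∫ t in v..w, G t := mul_le_mul_of_nonneg_right h₁ hI₂
    _ = (K * ∫ t in v..w, G t) * ∫ t in u..v, G t := by ring
    _ ≤ (∫ t in v..w, F t) * ∫ t in u..v, G t := mul_le_mul_of_nonneg_right h₂ hI₁

theorem IntervalIntegrable.comp_div_const {f : ℝ → ℝ} {a b c : ℝ}
    (hf : IntervalIntegrable f volume (a / c) (b / c)) (hc : c ≠ 0) :
    IntervalIntegrable (fun x => f (x / c)) volume a b := by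
  simpa [div_eq_mul_inv, hc] using hf.comp_mul_right (c := c⁻¹)

theorem continuousOn_primitive_Ici {f : ℝ → ℝ} {a : ℝ}
    (hf : ∀ b, a ≤ b → IntervalIntegrable f volume a b) :
    ContinuousOn (fun b => ∫ t in a..b, f t) (Ici a) := by
  refine continuousOn_of_locally_continuousOn fun x hx => ⟨Iio (x + 1), isOpen_Iio, lt_add_one x, ?_⟩
  have hax : a ≤ x + 1 := by linarith [mem_Ici.1 hx]
  refine (continuousOn_primitive_interval' (hf _ hax) left_mem_uIcc).mono ?_
  rw [uIcc_of_le hax]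
  exact fun y hy => ⟨hy.1, hy.2.le⟩

theorem MeasureTheory.LocallyIntegrableOn.intervalIntegrable_of_pos {α : ℝ → ℝ}
    (hα : LocallyIntegrableOn α (Ioi 0)) {p q : ℝ} (hp : 0 < p) (hq : 0 < q) :
    IntervalIntegrable α volume p q :=
  intervalIntegrable_iff.2 <|
    (hα.integrableOn_compact_subset (by simp [uIcc, Icc_subset_Ioi_iff, hp, hq])
      isCompact_uIcc).mono_set uIoc_subset_uIcc

section Scaling

variable {α : ℝ → ℝ} {σ : ℝ}

theorem integral_le_integral_div_of_scaling (hα : LocallyIntegrableOn α (Ioi 0)) (hσ : 0 < σ)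
    (hscale : ∀ l > 0, α (σ * l) ≤ α l / σ) {r u : ℝ} (hr : 0 < r) (hru : r ≤ u) :
    ∫ s in r..u, α s ≤ ∫ s in r / σ..u / σ, α s := by
  have hu : 0 < u := hr.trans_le hru
  have hcomp : ∫ t in r..u, α (t / σ) = σ * ∫ s in r / σ..u / σ, α s := by
    simpa using integral_comp_div α hσ.ne'
  have hpointwise : ∀ t ∈ Icc r u, σ * α t ≤ α (t / σ) := fun t ht => by
    have := hscale (t / σ) (div_pos (hr.trans_le ht.1) hσ)
    rw [mul_div_cancel₀ t hσ.ne'] at this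
    exact (le_div_iff₀' hσ).1 this
  have := integral_mono_on hru ((hα.intervalIntegrable_of_pos hr hu).const_mul σ)
    ((hα.intervalIntegrable_of_pos (div_pos hr hσ) (div_pos hu hσ)).comp_div_const hσ.ne')
    hpointwise
  rw [intervalIntegral.integral_const_mul, hcomp] at this
  exact le_of_mul_le_mul_left this hσ

theorem monotoneOn_integral_div_sub_integral (hα : LocallyIntegrableOn α (Ioi 0))
    (hα_nonneg : ∀ x ∈ Ioi 0, 0 ≤ α x) (hσ0 : 0 < σ) (hσ1 : σ ≤ 1)
    (hscale : ∀ l > 0, α (σ * l) ≤ α l / σ) {x₀ : ℝ} (hx₀ : 0 < x₀) :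
    MonotoneOn (fun t => (∫ s in x₀..t / σ, α s) - ∫ s in x₀..t, α s) (Ici 0) := by
  have hdiff : ∀ {r u : ℝ}, 0 < r → 0 < u →
      (∫ s in x₀..u, α s) - ∫ s in x₀..r, α s = ∫ s in r..u, α s := fun hr hu =>
    integral_interval_sub_left (hα.intervalIntegrable_of_pos hx₀ hu)
      (hα.intervalIntegrable_of_pos hx₀ hr)
  intro r hr u hu hru
  dsimp only
  rcases (mem_Ici.1 hr).eq_or_lt with rfl | hr
  · rcases (mem_Ici.1 hu).eq_or_lt with rfl | hu
    · exact le_rfl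
    rw [zero_div, sub_self, hdiff hu (div_pos hu hσ0)]
    refine integral_nonneg ((le_div_iff₀ hσ0).2 (mul_le_of_le_one_right hu.le hσ1)) ?_
    exact fun x hx => hα_nonneg x (hu.trans_le hx.1)
  have hu : 0 < u := hr.trans_le hru
  have := integral_le_integral_div_of_scaling hα hσ0 hscale hr hru
  rw [← hdiff hr hu, ← hdiff (div_pos hr hσ0) (div_pos hu hσ0)] at this
  linarith

theorem integral_div_mul_integral_le (hα : LocallyIntegrableOn α (Ioi 0))
    (hα_nonneg : ∀ x ∈ Ioi 0, 0 ≤ α x) (hσ0 : 0 < σ) (hσ1 : σ ≤ 1)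
    (hscale : ∀ l > 0, α (σ * l) ≤ α l / σ)
    (hE : ∀ u v, 0 ≤ u → 0 ≤ v →
      IntervalIntegrable (fun t => Real.exp (∫ s in (1:ℝ)..t, α s)) volume u v)
    {u v w : ℝ} (hu : 0 ≤ u) (huv : u ≤ v) (hvw : v ≤ w) :
    (∫ t in u / σ..v / σ, Real.exp (∫ s in (1:ℝ)..t, α s)) *
        ∫ t in v..w, Real.exp (∫ s in (1:ℝ)..t, α s) ≤
      (∫ t in v / σ..w / σ, Real.exp (∫ s in (1:ℝ)..t, α s)) *
        ∫ t in u..v, Real.exp (∫ s in (1:ℝ)..t, α s) := by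
  set E := fun t => Real.exp (∫ s in (1:ℝ)..t, α s)
  have hv := hu.trans huv
  have hw := hv.trans hvw
  have hEσ : ∀ {x y : ℝ}, 0 ≤ x → 0 ≤ y → IntervalIntegrable (fun t => E (t / σ)) volume x y :=
    fun hx hy => (hE _ _ (div_nonneg hx hσ0.le) (div_nonneg hy hσ0.le)).comp_div_const hσ0.ne'
  have hsubst : ∀ x y : ℝ, ∫ t in x / σ..y / σ, E t = σ⁻¹ * ∫ t in x..y, E (t / σ) := by
    intro x y
    rw [integral_comp_div E hσ0.ne', smul_eq_mul, inv_mul_cancel_left₀ hσ0.ne']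
  have hratio : MonotoneOn (fun t => E (t / σ) / E t) (Icc u w) := by
    refine fun r hr t ht hrt => ?_
    simp only [E, ← Real.exp_sub]
    exact Real.exp_le_exp.2 <| monotoneOn_integral_div_sub_integral hα hα_nonneg hσ0 hσ1 hscale
      one_pos (hu.trans hr.1) (hu.trans ht.1) hrt
  rw [hsubst, hsubst, mul_assoc, mul_assoc]
  refine mul_le_mul_of_nonneg_left ?_ (inv_nonneg.2 hσ0.le)
  exact integral_mul_integral_le_of_monotoneOn_div huv hvw (fun t _ => Real.exp_pos _) hratio
    (hEσ hu hv) (hEσ hv hw) (hE _ _ hu hv) (hE _ _ hv hw)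

end Scaling

/-- **Convexity of `λ ↦ a(a⁻¹(λ)/σ)`**, the key auxiliary claim in the proof of
the dilational interpolation inequality (Theorem 2).  With
`a(λ) = 1 + c ∫₀^λ exp(∫₁^t α(s) ds) dt` generated from a locally integrable
`α : (0,∞) → (0,∞)` obeying the scaling relation `α(σλ) ≤ α(λ)/σ` for
`σ ∈ (0,1]`, and `ainv` the inverse of the continuous strictly increasing
function `a`, the map `λ ↦ a(ainv(λ)/σ)` is convex on the range of `a`
for every `σ ∈ (0,1]`. -/
theorem dilational_convexity
    (α : ℝ → ℝ)
    (hα_loc : LocallyIntegrableOn α (Ioi 0))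
    (hα_pos : ∀ x ∈ Ioi (0:ℝ), 0 < α x)
    (hα_scale : ∀ σ ∈ Ioc (0:ℝ) 1, ∀ l > (0:ℝ), α (σ * l) ≤ α l / σ)
    (c : ℝ) (hc : 0 < c)
    (hint : ∀ l : ℝ, 0 ≤ l →
      IntervalIntegrable (fun t => Real.exp (∫ s in (1:ℝ)..t, α s)) volume 0 l)
    (a : ℝ → ℝ)
    (ha : ∀ l : ℝ, 0 ≤ l →
      a l = 1 + c * ∫ t in (0:ℝ)..l, Real.exp (∫ s in (1:ℝ)..t, α s))
    (ainv : ℝ → ℝ) (hainv : InvOn ainv a (Ici 0) (a '' Ici 0)) :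
    ∀ σ ∈ Ioc (0:ℝ) 1, ConvexOn ℝ (a '' Ici 0) (fun x => a (ainv x / σ)) := by
  intro σ hσ
  have hE : ∀ u v : ℝ, 0 ≤ u → 0 ≤ v →
      IntervalIntegrable (fun t => Real.exp (∫ s in (1:ℝ)..t, α s)) volume u v :=
    fun u v hu hv => (hint u hu).symm.trans (hint v hv)
  have hsub : ∀ u v : ℝ, 0 ≤ u → 0 ≤ v →
      a v - a u = c * ∫ t in u..v, Real.exp (∫ s in (1:ℝ)..t, α s) := by
    intro u v hu hv
    rw [ha v hv, ha u hu, ← integral_interval_sub_left (hint v hv) (hint u hu)]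
    ring
  have hmono : StrictMonoOn a (Ici 0) := fun u hu v hv huv => by
    have := intervalIntegral_pos_of_pos_on (hE u v hu hv) (fun x _ => Real.exp_pos _) huv
    linarith [hsub u v hu hv, mul_pos hc this]
  have hcont : ContinuousOn a (Ici 0) :=
    (continuousOn_const.add (continuousOn_const.mul (continuousOn_primitive_Ici hint))).congr ha
  refine convexOn_comp_of_slope_le (f := fun u => a (u / σ))
    (isPreconnected_Ici.image a hcont).ordConnected.convex hmono hainv.1 ?_
  intro u v w hu hv hw huv hvw
  have hσu := div_nonneg hu hσ.1.le
  have hσv := div_nonneg hv hσ.1.le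
  have hσw := div_nonneg hw hσ.1.le
  simp only [hsub _ _ hσu hσv, hsub _ _ hσv hσw, hsub _ _ hu hv, hsub _ _ hv hw]
  have := integral_div_mul_integral_le hα_loc (fun x hx => (hα_pos x hx).le) hσ.1 hσ.2
    (hα_scale σ hσ) hE hu huv.le hvw.le
  linear_combination c ^ 2 * this
end
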